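/- arXiv:1011.0335 — 2 statements merged into one kernel-verified Lean document; each statement's English description precedes it below -/
import Mathlib

section
/- Let c > 0 and let f₀ : ℝ → ℝ be C¹ with f₀' bounded below by -m where m > 0 (or f₀' ≥ 0, in which case T = ∞). Then for t ∈ [0, 1/(c m)), the implicit equation f(s,t) = f₀(s - c f(s,t) t) has a unique C¹ solution f, and f satisfies f_t + c f f_s = 0. -/
/-!
For `0 ≤ t < 1 / (c m)` the characteristic map `u ↦ u + c t f₀ u` has derivative at least
`1 - c m t > 0`, so it is a bijection of `ℝ`; a number `y` solves `y = f₀ (s - c y t)` exactly when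
`y = f₀ u` for a preimage `u` of `s`, which gives existence and uniqueness. The same positivity is
the nondegeneracy condition of the implicit function theorem applied to
`y - f₀ (s - c y t) = 0`, so near every point the solution agrees with a `C¹` implicit function,
and differentiating the implicit equation yields `f_t + c f f_s = 0`.
-/

open Set Filter Function Topology

theorem ContinuousLinearMap.isInvertible_of_apply_one_ne_zero {𝕜 : Type*}
    [NontriviallyNormedField 𝕜] {L : 𝕜 →L[𝕜] 𝕜} (h : L 1 ≠ 0) : L.IsInvertible :=
  ⟨ContinuousLinearEquiv.unitsEquivAut 𝕜 (Units.mk0 _ h), by ext; simp⟩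

theorem bijective_of_le_deriv {f : ℝ → ℝ} {δ : ℝ} (hf : Differentiable ℝ f) (hδ : 0 < δ)
    (h : ∀ x, δ ≤ deriv f x) : Bijective f := by
  have hgrow := mul_sub_le_image_sub_of_le_deriv hf h
  refine ⟨(strictMono_of_deriv_pos fun x => hδ.trans_le (h x)).injective,
    hf.continuous.surjective ?_ ?_⟩
  · refine tendsto_atTop_mono' atTop ?_
      (tendsto_atTop_add_const_left _ (f 0) (tendsto_id.const_mul_atTop hδ))
    filter_upwards [eventually_ge_atTop 0] with x hx
    rw [id_eq]
    linarith [hgrow hx]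
  · refine tendsto_atBot_mono' atBot ?_
      (tendsto_atBot_add_const_left _ (f 0) (tendsto_id.const_mul_atBot hδ))
    filter_upwards [eventually_le_atBot 0] with x hx
    rw [id_eq]
    linarith [hgrow hx]

noncomputable def oddExtension (g : ℝ → ℝ) (t : ℝ) : ℝ :=
  if 0 ≤ t then g t else 2 * g 0 - g (-t)

theorem oddExtension_of_nonneg {g : ℝ → ℝ} {t : ℝ} (ht : 0 ≤ t) : oddExtension g t = g t :=
  if_pos ht

theorem HasDerivWithinAt.hasDerivAt_oddExtension {g : ℝ → ℝ} {d : ℝ}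
    (h : HasDerivWithinAt g d (Ici 0) 0) : HasDerivAt (oddExtension g) d 0 := by
  have hright : HasDerivWithinAt (oddExtension g) d (Ici 0) 0 :=
    h.congr (fun τ hτ => oddExtension_of_nonneg hτ) (oddExtension_of_nonneg le_rfl)
  have hreflect : HasDerivWithinAt (fun τ => 2 * g 0 - g (-τ)) d (Iic 0) 0 := by
    have hneg : HasDerivWithinAt (fun τ => g (-τ)) (-d) (Iic 0) 0 :=
      (h.comp_of_eq 0 (hasDerivAt_neg 0).hasDerivWithinAt
        (fun τ (hτ : τ ∈ Iic 0) => neg_nonneg.mpr hτ) neg_zero.symm).congr_deriv (mul_neg_one d)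
    simpa using hneg.const_sub (2 * g 0)
  have hleft : HasDerivWithinAt (oddExtension g) d (Iic 0) 0 := by
    refine hreflect.congr (fun τ hτ => ?_) ?_
    · rcases (mem_Iic.mp hτ).eq_or_lt with rfl | hneg
      · rw [oddExtension_of_nonneg le_rfl, neg_zero]; ring
      · exact if_neg hneg.not_ge
    · rw [oddExtension_of_nonneg le_rfl, neg_zero]; ring
  simpa [Iic_union_Ici] using hleft.union hright

theorem hasDerivAt_oddExtension {g h : ℝ → ℝ} {d t : ℝ} (ht : 0 ≤ t) (hh : HasDerivAt h d t)
    (hgh : ∀ᶠ τ in 𝓝 t, 0 ≤ τ → g τ = h τ) : HasDerivAt (oddExtension g) d t := by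
  rcases ht.eq_or_lt with rfl | ht
  · exact (hh.hasDerivWithinAt.congr_of_eventuallyEq (eventually_nhdsWithin_iff.mpr hgh)
      (hgh.self_of_nhds le_rfl)).hasDerivAt_oddExtension
  · refine hh.congr_of_eventuallyEq ?_
    filter_upwards [hgh, lt_mem_nhds ht] with τ hτ hτ0
    rw [oddExtension_of_nonneg hτ0.le, hτ hτ0.le]

theorem exists_contDiffAt_implicit_solution {c : ℝ} {f₀ : ℝ → ℝ} (hf₀ : ContDiff ℝ 1 f₀)
    {p : ℝ × ℝ} {y : ℝ} (hy : y = f₀ (p.1 - c * y * p.2))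
    (hα : 1 + c * p.2 * deriv f₀ (p.1 - c * y * p.2) ≠ 0) :
    ∃ ψ : ℝ × ℝ → ℝ, ContDiffAt ℝ 1 ψ p ∧ ∀ᶠ q in 𝓝 p, ψ q = f₀ (q.1 - c * ψ q * q.2) := by
  set G : (ℝ × ℝ) × ℝ → ℝ := fun v => v.2 - f₀ (v.1.1 - c * v.2 * v.1.2)
  have hG : ContDiffAt ℝ 1 G (p, y) := by fun_prop
  have hline : HasDerivAt (fun z => G (p, z))
      (1 - deriv f₀ (p.1 - c * y * p.2) * -(c * 1 * p.2)) y :=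
    (hasDerivAt_id' y).sub ((hf₀.differentiable one_ne_zero _).hasDerivAt.comp y
      ((((hasDerivAt_id' y).const_mul c).mul_const p.2).const_sub p.1))
  have hinv : (fderiv ℝ G (p, y) ∘L .inr ℝ (ℝ × ℝ) ℝ).IsInvertible := by
    refine ContinuousLinearMap.isInvertible_of_apply_one_ne_zero ?_
    rw [((hG.differentiableAt one_ne_zero).hasFDerivAt.comp y
      (hasFDerivAt_prodMk_right p y)).hasDerivAt.unique hline]
    convert hα using 1
    ring
  refine ⟨hG.implicitFunction one_ne_zero hinv, hG.contDiffAt_implicitFunction one_ne_zero hinv, ?_⟩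
  filter_upwards [hG.eventually_apply_implicitFunction one_ne_zero hinv] with q hq
  simp only [G, ← hy, sub_self] at hq
  exact sub_eq_zero.mp hq

theorem burgers_of_implicit_eq {c : ℝ} {f₀ : ℝ → ℝ} {ψ : ℝ × ℝ → ℝ} {p : ℝ × ℝ}
    (hψ : DifferentiableAt ℝ ψ p) (hf₀ : DifferentiableAt ℝ f₀ (p.1 - c * ψ p * p.2))
    (heq : ∀ᶠ q in 𝓝 p, ψ q = f₀ (q.1 - c * ψ q * q.2))
    (hα : 1 + c * p.2 * deriv f₀ (p.1 - c * ψ p * p.2) ≠ 0) :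
    fderiv ℝ ψ p (0, 1) + c * ψ p * fderiv ℝ ψ p (1, 0) = 0 := by
  set A := fderiv ℝ ψ p
  set k := deriv f₀ (p.1 - c * ψ p * p.2)
  have hinner : HasFDerivAt (fun q : ℝ × ℝ => q.1 - c * ψ q * q.2)
      (.fst ℝ ℝ ℝ - ((c * ψ p) • .snd ℝ ℝ ℝ + p.2 • (c • A))) p :=
    hasFDerivAt_fst.sub ((hψ.hasFDerivAt.const_mul c).mul hasFDerivAt_snd)
  have hA : A = k • (.fst ℝ ℝ ℝ - ((c * ψ p) • .snd ℝ ℝ ℝ + p.2 • (c • A))) :=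
    hψ.hasFDerivAt.unique ((hf₀.hasDerivAt.comp_hasFDerivAt p hinner).congr_of_eventuallyEq heq)
  have hA_apply (v : ℝ × ℝ) : A v = k * (v.1 - (c * ψ p * v.2 + p.2 * (c * A v))) := by
    conv_lhs => rw [hA]
    simp only [smul_apply, sub_apply, add_apply, ContinuousLinearMap.coe_fst',
      ContinuousLinearMap.coe_snd', smul_eq_mul]
  have hprod : (A (0, 1) + c * ψ p * A (1, 0)) * (1 + c * p.2 * k) = 0 := by
    linear_combination hA_apply (0, 1) + c * ψ p * hA_apply (1, 0)
  exact (mul_eq_zero.mp hprod).resolve_right hα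

section Burgers

variable {c m t : ℝ} {f₀ : ℝ → ℝ}

def characteristic (c : ℝ) (f₀ : ℝ → ℝ) (t u : ℝ) : ℝ := u + c * t * f₀ u

theorem one_sub_mul_pos_of_mem_Ico (ht : t ∈ Ico 0 (1 / (c * m))) : 0 < 1 - c * m * t := by
  have hcm : 0 < c * m := one_div_pos.mp (ht.1.trans_lt ht.2)
  have := (lt_div_iff₀ hcm).mp ht.2
  linarith

theorem one_sub_mul_le_one_add_mul_deriv (hc : 0 ≤ c) (hbound : ∀ s, -m ≤ deriv f₀ s)
    (ht : 0 ≤ t) (u : ℝ) : 1 - c * m * t ≤ 1 + c * t * deriv f₀ u := by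
  nlinarith [mul_le_mul_of_nonneg_left (hbound u) (mul_nonneg hc ht)]

theorem one_add_mul_deriv_pos (hc : 0 ≤ c) (hbound : ∀ s, -m ≤ deriv f₀ s)
    (ht : t ∈ Ico 0 (1 / (c * m))) (u : ℝ) : 0 < 1 + c * t * deriv f₀ u :=
  (one_sub_mul_pos_of_mem_Ico ht).trans_le (one_sub_mul_le_one_add_mul_deriv hc hbound ht.1 u)

theorem characteristic_bijective (hc : 0 ≤ c) (hf₀ : Differentiable ℝ f₀)
    (hbound : ∀ s, -m ≤ deriv f₀ s) (ht : t ∈ Ico 0 (1 / (c * m))) :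
    Bijective (characteristic c f₀ t) := by
  have hderiv u : HasDerivAt (characteristic c f₀ t) (1 + c * t * deriv f₀ u) u :=
    (hasDerivAt_id u).add ((hf₀ u).hasDerivAt.const_mul (c * t))
  refine bijective_of_le_deriv (fun u => (hderiv u).differentiableAt)
    (one_sub_mul_pos_of_mem_Ico ht) fun u => ?_
  rw [(hderiv u).deriv]
  exact one_sub_mul_le_one_add_mul_deriv hc hbound ht.1 u

/-- For `t ≥ 0`, the value of `f₀` at the foot of the characteristic through `(s, t)`. Any
continuation to `t < 0` would do as long as the two-sided `t`-derivative at `t = 0` exists; the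
point reflection `oddExtension` provides one. -/
noncomputable def burgersSolution (c : ℝ) (f₀ : ℝ → ℝ) (s : ℝ) : ℝ → ℝ :=
  oddExtension fun t => f₀ (invFun (characteristic c f₀ t) s)

theorem burgersSolution_of_nonneg (ht : 0 ≤ t) (s : ℝ) :
    burgersSolution c f₀ s t = f₀ (invFun (characteristic c f₀ t) s) :=
  oddExtension_of_nonneg ht

theorem burgersSolution_eq (hbij : Bijective (characteristic c f₀ t)) (ht : 0 ≤ t) (s : ℝ) :
    burgersSolution c f₀ s t = f₀ (s - c * burgersSolution c f₀ s t * t) := by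
  have hs : characteristic c f₀ t (invFun (characteristic c f₀ t) s) = s :=
    rightInverse_invFun hbij.2 s
  rw [burgersSolution_of_nonneg ht]
  congr 1
  simp only [characteristic] at hs
  linear_combination hs

theorem eq_burgersSolution (hbij : Bijective (characteristic c f₀ t)) (ht : 0 ≤ t) {s y : ℝ}
    (hy : y = f₀ (s - c * y * t)) : y = burgersSolution c f₀ s t := by
  have hs : characteristic c f₀ t (s - c * y * t) = s := by
    simp only [characteristic, ← hy]
    ring
  rw [burgersSolution_of_nonneg ht, ← hs, leftInverse_invFun hbij.1, ← hy]

theorem exists_local_burgersSolution (hc : 0 ≤ c) (hf₀ : ContDiff ℝ 1 f₀)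
    (hbound : ∀ s, -m ≤ deriv f₀ s) {p : ℝ × ℝ} (hp : p.2 ∈ Ico 0 (1 / (c * m))) :
    ∃ ψ : ℝ × ℝ → ℝ, ContDiffAt ℝ 1 ψ p ∧ (∀ᶠ q in 𝓝 p, ψ q = f₀ (q.1 - c * ψ q * q.2)) ∧
      ∀ᶠ q in 𝓝 p, q.2 ∈ Ico 0 (1 / (c * m)) → burgersSolution c f₀ q.1 q.2 = ψ q := by
  have hbij {t} (ht : t ∈ Ico 0 (1 / (c * m))) :=
    characteristic_bijective hc (hf₀.differentiable one_ne_zero) hbound ht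
  obtain ⟨ψ, hψ, hψeq⟩ := exists_contDiffAt_implicit_solution hf₀
    (burgersSolution_eq (hbij hp) hp.1 p.1) (one_add_mul_deriv_pos hc hbound hp _).ne'
  refine ⟨ψ, hψ, hψeq, ?_⟩
  filter_upwards [hψeq] with q hq hqt
  exact (eq_burgersSolution (hbij hqt) hqt.1 hq).symm

theorem burgersSolution_pde (hc : 0 ≤ c) (hf₀ : ContDiff ℝ 1 f₀)
    (hbound : ∀ s, -m ≤ deriv f₀ s) {s : ℝ} (ht : t ∈ Ico 0 (1 / (c * m))) :
    deriv (fun τ => burgersSolution c f₀ s τ) t +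
      c * burgersSolution c f₀ s t * deriv (fun σ => burgersSolution c f₀ σ t) s = 0 := by
  obtain ⟨ψ, hψC, hψeq, hsol⟩ := exists_local_burgersSolution hc hf₀ hbound (p := (s, t)) ht
  have hψ := (hψC.differentiableAt one_ne_zero).hasFDerivAt
  have hspace : HasDerivAt (fun σ => burgersSolution c f₀ σ t) (fderiv ℝ ψ (s, t) (1, 0)) s := by
    refine (hψ.comp_hasDerivAt s ((hasDerivAt_id s).prodMk (hasDerivAt_const s t)))
      |>.congr_of_eventuallyEq ?_
    filter_upwards [((Continuous.prodMk_left t).tendsto s).eventually hsol] with σ hσ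
    exact hσ ht
  have htime : HasDerivAt (fun τ => burgersSolution c f₀ s τ) (fderiv ℝ ψ (s, t) (0, 1)) t := by
    refine hasDerivAt_oddExtension ht.1
      (hψ.comp_hasDerivAt t ((hasDerivAt_const t s).prodMk (hasDerivAt_id t))) ?_
    filter_upwards [((Continuous.prodMk_right s).tendsto t).eventually hsol, Iio_mem_nhds ht.2]
      with τ hτ hτT hτ0
    exact (burgersSolution_of_nonneg hτ0 s).symm.trans (hτ ⟨hτ0, hτT⟩)
  rw [htime.deriv, hspace.deriv, hsol.self_of_nhds ht]
  exact burgers_of_implicit_eq hψ.differentiableAt (hf₀.differentiable one_ne_zero _) hψeq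
    (one_add_mul_deriv_pos hc hbound ht _).ne'

end Burgers

theorem stmt_8_general (c m : ℝ) (hc : 0 < c)
    (f₀ : ℝ → ℝ) (hf₀ : ContDiff ℝ 1 f₀)
    (hbound : ∀ s, -m ≤ deriv f₀ s) :
    ∃ f : ℝ → ℝ → ℝ,
      ContDiffOn ℝ 1 (fun p : ℝ × ℝ => f p.1 p.2) (Set.univ ×ˢ Set.Ico 0 (1 / (c * m))) ∧
      (∀ s : ℝ, ∀ t ∈ Set.Ico (0:ℝ) (1 / (c * m)), f s t = f₀ (s - c * f s t * t)) ∧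
      (∀ s : ℝ, ∀ t ∈ Set.Ico (0:ℝ) (1 / (c * m)),
        deriv (fun τ => f s τ) t + c * f s t * deriv (fun σ => f σ t) s = 0) ∧
      ∀ g : ℝ → ℝ → ℝ,
        (∀ s : ℝ, ∀ t ∈ Set.Ico (0:ℝ) (1 / (c * m)), g s t = f₀ (s - c * g s t * t)) →
        ∀ s : ℝ, ∀ t ∈ Set.Ico (0:ℝ) (1 / (c * m)), g s t = f s t := by
  have hbij {t} (ht : t ∈ Ico 0 (1 / (c * m))) :=
    characteristic_bijective hc.le (hf₀.differentiable one_ne_zero) hbound ht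
  refine ⟨burgersSolution c f₀, fun p hp => ?_, fun s t ht => burgersSolution_eq (hbij ht) ht.1 s,
    fun s t ht => burgersSolution_pde hc.le hf₀ hbound ht,
    fun g hg s t ht => eq_burgersSolution (hbij ht) ht.1 (hg s t ht)⟩
  obtain ⟨ψ, hψ, -, hsol⟩ := exists_local_burgersSolution hc.le hf₀ hbound hp.2
  refine hψ.contDiffWithinAt.congr_of_eventuallyEq ?_ (hsol.self_of_nhds hp.2)
  filter_upwards [eventually_nhdsWithin_of_eventually_nhds hsol, self_mem_nhdsWithin]
    with q hq hqS
  exact hq hqS.2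

theorem stmt_8 (c m : ℝ) (hc : 0 < c) (hm : 0 < m)
    (f₀ : ℝ → ℝ) (hf₀ : ContDiff ℝ 1 f₀)
    (hbound : ∀ s, -m ≤ deriv f₀ s) :
    ∃ f : ℝ → ℝ → ℝ,
      ContDiffOn ℝ 1 (fun p : ℝ × ℝ => f p.1 p.2) (Set.univ ×ˢ Set.Ico 0 (1 / (c * m))) ∧
      (∀ s : ℝ, ∀ t ∈ Set.Ico (0:ℝ) (1 / (c * m)), f s t = f₀ (s - c * f s t * t)) ∧
      (∀ s : ℝ, ∀ t ∈ Set.Ico (0:ℝ) (1 / (c * m)),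
        deriv (fun τ => f s τ) t + c * f s t * deriv (fun σ => f σ t) s = 0) ∧
      ∀ g : ℝ → ℝ → ℝ,
        (∀ s : ℝ, ∀ t ∈ Set.Ico (0:ℝ) (1 / (c * m)), g s t = f₀ (s - c * g s t * t)) →
        ∀ s : ℝ, ∀ t ∈ Set.Ico (0:ℝ) (1 / (c * m)), g s t = f s t :=
  stmt_8_general c m hc f₀ hf₀ hbound
end

section
/- Let v₁, v₂ be unit vectors in ℝ² with v₁·v₂ = -a, 0 < a < 1, and f₁, f₂ C¹ solutions of f_t + (1+a)ff_s = 0. Set u = f₁(x·v₁,t)v₁ + f₂(x·v₂,t)v₂ and w = f₁(x·v₁,t) + f₂(x·v₂,t). Then u_t + (u·∇)u + a w ∇w = 0 and w_t + u·∇w + a w div u = 0. -/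
/-!
Each term `fᵢ(x·vᵢ, t) vᵢ` is a plane wave: its spatial derivative is the rank-one map
`h ↦ ∂ₛfᵢ ⟪vᵢ, h⟫ vᵢ`, its contribution to `∇w` is `∂ₛfᵢ vᵢ` and to `div u` is `∂ₛfᵢ ‖vᵢ‖²`.
Pointwise, both equations then reduce to linear algebra in the span of `v₁, v₂`. In the
momentum equation the coefficient of `v₁` is `∂ₜf₁ + ∂ₛf₁ (f₁ - a f₂) + a (f₁ + f₂) ∂ₛf₁`:
the cross terms in `f₂` cancel because `⟪v₁, v₂⟫ = -a`, leaving the Burgers equation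
`∂ₜf₁ + (1 + a) f₁ ∂ₛf₁ = 0`. The density equation is the sum of the two Burgers equations
for the same reason.
-/

open scoped RealInnerProductSpace

section PartialDerivatives

variable {𝕜 E F G : Type*} [NontriviallyNormedField 𝕜] [NormedAddCommGroup E] [NormedSpace 𝕜 E]
  [NormedAddCommGroup F] [NormedSpace 𝕜 F] [NormedAddCommGroup G] [NormedSpace 𝕜 G]
  {f : E → F → G}

theorem Differentiable.differentiableAt_uncurry_left
    (hf : Differentiable 𝕜 (fun p : E × F => f p.1 p.2)) (x : E) (y : F) :
    DifferentiableAt 𝕜 (fun x' => f x' y) x :=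
  (hf _).comp x (differentiableAt_id.prodMk (differentiableAt_const y))

theorem Differentiable.differentiableAt_uncurry_right
    (hf : Differentiable 𝕜 (fun p : E × F => f p.1 p.2)) (x : E) (y : F) :
    DifferentiableAt 𝕜 (fun y' => f x y') y :=
  (hf _).comp y ((differentiableAt_const x).prodMk differentiableAt_id)

end PartialDerivatives

section PlaneWave

variable {E : Type*} [NormedAddCommGroup E] [InnerProductSpace ℝ E] {g : ℝ → ℝ} {v x : E}

theorem hasFDerivAt_inner_const_right (v x : E) :
    HasFDerivAt (fun y : E => ⟪y, v⟫) (innerSL ℝ v) x :=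
  (innerSL ℝ v).hasFDerivAt.congr_of_eventuallyEq (.of_forall fun y => real_inner_comm v y)

theorem DifferentiableAt.hasFDerivAt_comp_inner (hg : DifferentiableAt ℝ g ⟪x, v⟫) :
    HasFDerivAt (fun y => g ⟪y, v⟫) (deriv g ⟪x, v⟫ • innerSL ℝ v) x :=
  hg.hasDerivAt.comp_hasFDerivAt x (hasFDerivAt_inner_const_right v x)

-- `InnerProductSpace.toDual ℝ E v` is definitionally `innerSL ℝ v`.
theorem HasFDerivAt.hasGradientAt_of_innerSL [CompleteSpace E] {f : E → ℝ}
    (hf : HasFDerivAt f (innerSL ℝ v) x) : HasGradientAt f v x :=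
  hasGradientAt_iff_hasFDerivAt.2 hf

end PlaneWave

section Divergence

variable {ι : Type*} [Fintype ι] [DecidableEq ι]

theorem sum_fderiv_apply_single_eq {u : EuclideanSpace ℝ ι → EuclideanSpace ℝ ι}
    {L : EuclideanSpace ℝ ι →L[ℝ] EuclideanSpace ℝ ι} {x : EuclideanSpace ℝ ι}
    (hu : HasFDerivAt u L x) :
    ∑ i, fderiv ℝ (fun y => u y i) x (EuclideanSpace.single i 1) =
      ∑ i, L (EuclideanSpace.single i 1) i :=
  Finset.sum_congr rfl fun i _ =>
    congrArg (· (EuclideanSpace.single i 1)) ((EuclideanSpace.proj i).hasFDerivAt.comp x hu).fderiv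

theorem sum_smul_innerSL_smulRight_apply_single (c : ℝ) (v w : EuclideanSpace ℝ ι) :
    ∑ i, (c • innerSL ℝ v).smulRight w (EuclideanSpace.single i 1) i = c * ⟪v, w⟫ := by
  simp [PiLp.inner_apply, Finset.mul_sum, mul_comm, mul_assoc]

end Divergence

section TwoWaveAlgebra

variable {E : Type*} [NormedAddCommGroup E] [InnerProductSpace ℝ E]
  {a f₁ f₂ d₁ d₂ p₁ p₂ : ℝ} {v₁ v₂ : E}

theorem two_wave_momentum_eq_zero (hv₁ : ‖v₁‖ = 1) (hv₂ : ‖v₂‖ = 1) (hdot : ⟪v₁, v₂⟫ = -a)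
    (hb₁ : p₁ + (1 + a) * f₁ * d₁ = 0) (hb₂ : p₂ + (1 + a) * f₂ * d₂ = 0) :
    p₁ • v₁ + p₂ • v₂
      + ((d₁ • innerSL ℝ v₁).smulRight v₁ + (d₂ • innerSL ℝ v₂).smulRight v₂) (f₁ • v₁ + f₂ • v₂)
      + (a * (f₁ + f₂)) • (d₁ • v₁ + d₂ • v₂) = 0 := by
  have hdot' : ⟪v₂, v₁⟫ = -a := real_inner_comm v₁ v₂ ▸ hdot
  simp only [add_apply, smul_apply, ContinuousLinearMap.smulRight_apply, innerSL_apply_apply,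
    inner_add_right, real_inner_smul_right, real_inner_self_eq_norm_sq, hv₁, hv₂, hdot, hdot',
    smul_eq_mul]
  match_scalars
  · linear_combination hb₁
  · linear_combination hb₂

theorem two_wave_density_eq_zero (hv₁ : ‖v₁‖ = 1) (hv₂ : ‖v₂‖ = 1) (hdot : ⟪v₁, v₂⟫ = -a)
    (hb₁ : p₁ + (1 + a) * f₁ * d₁ = 0) (hb₂ : p₂ + (1 + a) * f₂ * d₂ = 0) :
    p₁ + p₂ + ⟪f₁ • v₁ + f₂ • v₂, d₁ • v₁ + d₂ • v₂⟫
      + a * (f₁ + f₂) * (d₁ * ⟪v₁, v₁⟫ + d₂ * ⟪v₂, v₂⟫) = 0 := by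
  have hdot' : ⟪v₂, v₁⟫ = -a := real_inner_comm v₁ v₂ ▸ hdot
  simp only [inner_add_left, inner_add_right, real_inner_smul_left, real_inner_smul_right,
    real_inner_self_eq_norm_sq, hv₁, hv₂, hdot, hdot']
  linear_combination hb₁ + hb₂

end TwoWaveAlgebra

theorem stmt_18_general (a : ℝ)
    (v₁ v₂ : EuclideanSpace ℝ (Fin 2)) (hv₁ : ‖v₁‖ = 1) (hv₂ : ‖v₂‖ = 1)
    (hdot : ⟪v₁, v₂⟫ = -a)
    (f₁ f₂ : ℝ → ℝ → ℝ)
    (hf₁ : ContDiff ℝ 1 (fun p : ℝ × ℝ => f₁ p.1 p.2))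
    (hf₂ : ContDiff ℝ 1 (fun p : ℝ × ℝ => f₂ p.1 p.2))
    (hb₁ : ∀ s t : ℝ,
      deriv (fun τ => f₁ s τ) t + (1 + a) * f₁ s t * deriv (fun σ => f₁ σ t) s = 0)
    (hb₂ : ∀ s t : ℝ,
      deriv (fun τ => f₂ s τ) t + (1 + a) * f₂ s t * deriv (fun σ => f₂ σ t) s = 0)
    (u : EuclideanSpace ℝ (Fin 2) → ℝ → EuclideanSpace ℝ (Fin 2))
    (hu : u = fun x t => f₁ ⟪x, v₁⟫ t • v₁ + f₂ ⟪x, v₂⟫ t • v₂)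
    (w : EuclideanSpace ℝ (Fin 2) → ℝ → ℝ)
    (hw : w = fun x t => f₁ ⟪x, v₁⟫ t + f₂ ⟪x, v₂⟫ t) :
    ∀ (x : EuclideanSpace ℝ (Fin 2)) (t : ℝ),
      (deriv (fun τ => u x τ) t + fderiv ℝ (fun y => u y t) x (u x t)
        + (a * w x t) • gradient (fun y => w y t) x = 0) ∧
      (deriv (fun τ => w x τ) t + ⟪u x t, gradient (fun y => w y t) x⟫
        + a * w x t *
          (∑ i, fderiv ℝ (fun y => u y t i) x (EuclideanSpace.single i 1)) = 0) := by
  subst hu hw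
  intro x t
  beta_reduce
  have hF₁ := hf₁.differentiable one_ne_zero
  have hF₂ := hf₂.differentiable one_ne_zero
  have hx₁ := (hF₁.differentiableAt_uncurry_left ⟪x, v₁⟫ t).hasFDerivAt_comp_inner
  have hx₂ := (hF₂.differentiableAt_uncurry_left ⟪x, v₂⟫ t).hasFDerivAt_comp_inner
  have ht₁ := (hF₁.differentiableAt_uncurry_right ⟪x, v₁⟫ t).hasDerivAt
  have ht₂ := (hF₂.differentiableAt_uncurry_right ⟪x, v₂⟫ t).hasDerivAt
  have hU := (hx₁.smul_const v₁).fun_add (hx₂.smul_const v₂)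
  have hW := hx₁.fun_add hx₂
  rw [← map_smul, ← map_smul, ← map_add] at hW
  replace hW := hW.hasGradientAt_of_innerSL
  refine ⟨?_, ?_⟩
  · rw [((ht₁.smul_const v₁).fun_add (ht₂.smul_const v₂)).deriv, hU.fderiv, hW.gradient]
    exact two_wave_momentum_eq_zero hv₁ hv₂ hdot (hb₁ _ _) (hb₂ _ _)
  · rw [(ht₁.fun_add ht₂).deriv, hW.gradient, sum_fderiv_apply_single_eq hU]
    simp only [add_apply, PiLp.add_apply, Finset.sum_add_distrib,
      sum_smul_innerSL_smulRight_apply_single]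
    exact two_wave_density_eq_zero hv₁ hv₂ hdot (hb₁ _ _) (hb₂ _ _)

theorem stmt_18 (a : ℝ) (ha : 0 < a) (ha1 : a < 1)
    (v₁ v₂ : EuclideanSpace ℝ (Fin 2)) (hv₁ : ‖v₁‖ = 1) (hv₂ : ‖v₂‖ = 1)
    (hdot : ⟪v₁, v₂⟫ = -a)
    (f₁ f₂ : ℝ → ℝ → ℝ)
    (hf₁ : ContDiff ℝ 1 (fun p : ℝ × ℝ => f₁ p.1 p.2))
    (hf₂ : ContDiff ℝ 1 (fun p : ℝ × ℝ => f₂ p.1 p.2))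
    (hb₁ : ∀ s t : ℝ,
      deriv (fun τ => f₁ s τ) t + (1 + a) * f₁ s t * deriv (fun σ => f₁ σ t) s = 0)
    (hb₂ : ∀ s t : ℝ,
      deriv (fun τ => f₂ s τ) t + (1 + a) * f₂ s t * deriv (fun σ => f₂ σ t) s = 0)
    (u : EuclideanSpace ℝ (Fin 2) → ℝ → EuclideanSpace ℝ (Fin 2))
    (hu : u = fun x t => f₁ ⟪x, v₁⟫ t • v₁ + f₂ ⟪x, v₂⟫ t • v₂)
    (w : EuclideanSpace ℝ (Fin 2) → ℝ → ℝ)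
    (hw : w = fun x t => f₁ ⟪x, v₁⟫ t + f₂ ⟪x, v₂⟫ t) :
    ∀ (x : EuclideanSpace ℝ (Fin 2)) (t : ℝ),
      (deriv (fun τ => u x τ) t + fderiv ℝ (fun y => u y t) x (u x t)
        + (a * w x t) • gradient (fun y => w y t) x = 0) ∧
      (deriv (fun τ => w x τ) t + ⟪u x t, gradient (fun y => w y t) x⟫
        + a * w x t *
          (∑ i, fderiv ℝ (fun y => u y t i) x (EuclideanSpace.single i 1)) = 0) :=
  stmt_18_general a v₁ v₂ hv₁ hv₂ hdot f₁ f₂ hf₁ hf₂ hb₁ hb₂ u hu w hw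
end
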